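/- For all integers n ≥ 1 and f with 0 ≤ f < n, in every execution of Algorithm B in which at most f players crash, every non-faulty player decides at the end of round f+1, and its decision value is the input bit of some player (validity and termination in f+1 rounds). -/
import Mathlib


open Finset

/-- An adversary crashing at most `f` of the `n` players: each crashed player
gets a crash round (`≥ 1`) and, for its crash round, a choice of which of its
messages are delivered. -/
structure Adversary (n f : ℕ) where
  crashRound : Fin n → Option ℕ
  delivered : Fin n → Fin n → Prop
  card_crash_le : (Finset.univ.filter fun p => (crashRound p).isSome).card ≤ f
  one_le_crash : ∀ p r, crashRound p = some r → 1 ≤ r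

namespace Adversary
variable {n f : ℕ}

/-- `p` is alive in round `r`: it does not crash in any round `< r`. -/
def Alive (A : Adversary n f) (p : Fin n) (r : ℕ) : Prop :=
  ∀ r', A.crashRound p = some r' → r ≤ r'

/-- `p` never crashes. -/
def NonFaulty (A : Adversary n f) (p : Fin n) : Prop := A.crashRound p = none

/-- A message that `p` is prescribed to send to `q` in round `r` actually
arrives (provided `q` is awake): `p` must be alive in round `r`, and if `r` is
`p`'s crash round, the adversary must have chosen to deliver this message. -/
def Arrives (A : Adversary n f) (p q : Fin n) (r : ℕ) : Prop :=
  A.Alive p r ∧ (A.crashRound p = some r → A.delivered p q)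

end Adversary

/-- Committee `C d` of the `JoinCommittees a b` assignment on `n` players:
player `i % n` joins committee `C ⌈i/b⌉` for each `1 ≤ i ≤ a * b`, so that
`C d = {i % n : (d-1)*b < i ≤ d*b, i ≤ a*b}`. -/
def committee (n : ℕ) (hn : 0 < n) (a b d : ℕ) : Finset (Fin n) :=
  ((Finset.Ioc ((d - 1) * b) (d * b)).filter fun i => i ≤ a * b).image
    fun i => ⟨i % n, Nat.mod_lt i hn⟩

/-- `⌈√n⌉`, the size of the committees of Algorithm B. -/
noncomputable def sqrtCeil (n : ℕ) : ℕ := ⌈Real.sqrt n⌉₊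

/-- `τ = ⌈(f+1)/√n⌉`, the number of rounds an activated player of Algorithm B
stays awake forwarding the bit `1`. -/
noncomputable def tauB (n f : ℕ) : ℕ := ⌈((f : ℝ) + 1) / Real.sqrt n⌉₊

variable {n : ℕ}

/-- The committees `C 1, …, C f` of Algorithm B, of size `⌈√n⌉`. -/
noncomputable def committeeB (hn : 0 < n) (f d : ℕ) : Finset (Fin n) :=
  committee n hn f (sqrtCeil n) d

/-- Given the state `st` at the start of round `r` (`st q = (Y, T)` of player
`q`), player `q` is prescribed by Algorithm B to send the bit `1` to player
`p` in round `r`. -/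
noncomputable def SendsOneB (hn : 0 < n) (f : ℕ) (X : Fin n → Bool)
    (st : Fin n → Bool × ℕ) (q p : Fin n) (r : ℕ) : Prop :=
  (r = 1 ∧ X q = true ∧ p ∈ committeeB hn f 1) ∨
  (2 ≤ r ∧ r ≤ f ∧ 0 < (st q).2 ∧ p ∈ committeeB hn f r) ∨
  (r = f + 1 ∧ ((st q).1 = true ∨ X q = true))

open scoped Classical in
/-- `execB hn f X A r p = (Y, T)`: the state of player `p` (its bit `Y` and
its counter `T`) at the end of round `r` of Algorithm B (equivalently, at the
start of round `r+1`); `r = 0` gives the initial state `(false, 0)`. -/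
noncomputable def execB (hn : 0 < n) (f : ℕ) (X : Fin n → Bool)
    (A : Adversary n f) : ℕ → Fin n → Bool × ℕ
  | 0 => fun _ => (false, 0)
  | r + 1 => fun p =>
      if A.Alive p (r + 1) then
        let st := execB hn f X A r
        let rcv : Prop :=
          ∃ q, SendsOneB hn f X st q p (r + 1) ∧ A.Arrives q p (r + 1)
        (if (st p).1 = true ∨ rcv ∨ (r + 1 = f + 1 ∧ X p = true) then true
          else false,
         if rcv ∧ (st p).1 = false then tauB n f
         else if r + 1 = 1 ∧ X p = true then tauB n f
         else if 2 ≤ r + 1 ∧ r + 1 ≤ f then (st p).2 - 1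
         else (st p).2)
      else execB hn f X A r p

/-- Player `p` decides (at the end of round `f+1`) on the bit `v`:
`p` survives all of rounds `1, …, f+1` and its bit `Y` equals `v` then. -/
def DecidesB (hn : 0 < n) (f : ℕ) (X : Fin n → Bool) (A : Adversary n f)
    (p : Fin n) (v : Bool) : Prop :=
  A.Alive p (f + 2) ∧ (execB hn f X A (f + 1) p).1 = v

open scoped Classical in
/-- The set of players that receive a `1`-valued message in round `r` of
Algorithm B. -/
noncomputable def recvOneB (hn : 0 < n) (f : ℕ) (X : Fin n → Bool)
    (A : Adversary n f) (r : ℕ) : Finset (Fin n) :=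
  Finset.univ.filter fun p => A.Alive p r ∧
    ∃ q, SendsOneB hn f X (execB hn f X A (r - 1)) q p r ∧ A.Arrives q p r

open scoped Classical in
/-- The sets `P r`: `P 1 = {p₁}` where `p₁` is the largest-index player with
input `1`, and `P (r+1) = P r ∪ {players receiving a 1-valued message in round r}`. -/
noncomputable def PsetB (hn : 0 < n) (f : ℕ) (X : Fin n → Bool)
    (A : Adversary n f) (p₁ : Fin n) : ℕ → Finset (Fin n)
  | 0 => ∅
  | r + 1 =>
      if r = 0 then {p₁}
      else PsetB hn f X A p₁ r ∪ recvOneB hn f X A r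

/-- The rounds in which player `p` is prescribed to be awake in Algorithm B:
rounds `1` and `f+1`, the awake round of each committee `p` belongs to, and
every round of `[2, f]` at whose start `p`'s counter `T` is positive. -/
noncomputable def AwakeB (hn : 0 < n) (f : ℕ) (X : Fin n → Bool)
    (A : Adversary n f) (p : Fin n) (r : ℕ) : Prop :=
  r = 1 ∨ r = f + 1 ∨
    (2 ≤ r ∧ r ≤ f ∧
      (p ∈ committeeB hn f r ∨ 0 < (execB hn f X A (r - 1) p).2))

open scoped Classical in
/-- The number of rounds in which player `p` is awake in an execution of
Algorithm B. -/
noncomputable def awakeCountB (hn : 0 < n) (f : ℕ) (X : Fin n → Bool)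
    (A : Adversary n f) (p : Fin n) : ℕ :=
  ((Finset.Icc 1 (f + 1)).filter fun r => AwakeB hn f X A p r).card

open scoped Classical in
/-- The total number of messages sent in an execution of Algorithm B:
a message is sent for every round `r ∈ [1, f+1]` and every pair `(q, p)` such
that `q` is alive in round `r` and prescribed to send the bit `1` to `p`. -/
noncomputable def msgCountB (hn : 0 < n) (f : ℕ) (X : Fin n → Bool)
    (A : Adversary n f) : ℕ :=
  ∑ r ∈ Finset.Icc 1 (f + 1),
    (Finset.univ.filter fun qp : Fin n × Fin n =>
      A.Alive qp.1 r ∧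
        SendsOneB hn f X (execB hn f X A (r - 1)) qp.1 qp.2 r).card


open scoped Classical in
lemma execB_exists_one (hn : 0 < n) (f : ℕ) (X : Fin n → Bool)
    (A : Adversary n f) :
    ∀ r p, ((execB hn f X A r p).1 = true ∨ 0 < (execB hn f X A r p).2) →
      ∃ q, X q = true := by
  intro r
  induction r with
  | zero => intro p h; simp [execB] at h
  | succ r ih =>
    intro p h
    rw [execB] at h
    dsimp only at h
    by_cases hal : A.Alive p (r + 1)
    · rw [if_pos hal] at h
      simp only at h
      have hrcv : (∃ q, SendsOneB hn f X (execB hn f X A r) q p (r + 1) ∧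
          A.Arrives q p (r + 1)) → ∃ q, X q = true := by
        rintro ⟨q, hs, -⟩
        rcases hs with ⟨-, hx, -⟩ | ⟨-, -, ht, -⟩ | ⟨-, hy | hx⟩
        · exact ⟨q, hx⟩
        · exact ih q (Or.inr ht)
        · exact ih q (Or.inl hy)
        · exact ⟨q, hx⟩
      rcases h with h | h
      · split at h
        · next hc =>
          rcases hc with hy | hc | ⟨-, hx⟩
          · exact ih p (Or.inl hy)
          · exact hrcv hc
          · exact ⟨p, hx⟩
        · simp at h
      · split at h
        · next hc => exact hrcv hc.1
        · split at h
          · next hc => exact ⟨p, hc.2⟩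
          · split at h
            · exact ih p (Or.inr (Nat.lt_of_lt_of_le h (Nat.sub_le _ _)))
            · exact ih p (Or.inr h)
    · rw [if_neg hal] at h
      exact ih p h

/-- For all `n ≥ 1` and `0 ≤ f < n`, in every execution of
Algorithm B with at most `f` crashes, every non-faulty player decides at the
end of round `f+1`, and its decision value is the input bit of some player
(validity and termination in `f+1` rounds). -/
theorem algorithmB_validity_termination (n f : ℕ) (hn : 0 < n) (hf : f < n)
    (X : Fin n → Bool) (A : Adversary n f) :
    ∀ p : Fin n, A.NonFaulty p →
      ∃ v, DecidesB hn f X A p v ∧ ∃ q, v = X q := by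
  intro p hp
  have hal : ∀ r, A.Alive p r := by
    intro r r' hr'
    rw [hp] at hr'
    exact absurd hr' (by simp)
  refine ⟨(execB hn f X A (f + 1) p).1, ⟨hal _, rfl⟩, ?_⟩
  by_cases hv : (execB hn f X A (f + 1) p).1 = true
  · obtain ⟨q, hq⟩ := execB_exists_one hn f X A (f + 1) p (Or.inl hv)
    exact ⟨q, by rw [hv, hq]⟩
  · refine ⟨p, ?_⟩
    rw [Bool.not_eq_true] at hv
    rw [hv]
    by_contra hx
    have hx' : X p = true := by
      cases hX : X p
      · exact absurd hX.symm hx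
      · rfl
    have : (execB hn f X A (f + 1) p).1 = true := by
      rw [execB]
      dsimp only
      rw [if_pos (hal _)]
      simp only
      rw [if_pos (Or.inr (Or.inr ⟨rfl, hx'⟩))]
    rw [hv] at this
    exact absurd this (by simp)
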